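/- Let m ≥ 3 be an integer, p_1, …, p_m ∈ ℂ[x] nonzero polynomials, and k a positive integer such that p_1^k + p_2^k + ⋯ + p_m^k = 0 and for all i ≠ j the quotient p_i/p_j is not a constant (i.e., p_i is not a constant multiple of p_j). Then k < (m^3 + 7m^2 − 49m + 68)/3. -/

import Mathlib

/-!
Write `f i = p i ^ k`. Dividing out the common factor of the `p i`, we may assume that they have
no common root. If for some `r` the `f i` with `i ≠ r` are linearly dependent, the `k`-th roots of
the coefficients of a dependence give a smaller instance of the problem. Otherwise any `m - 1` of
the `f i` are linearly independent, so their Wronskian `W` is nonzero, and since `∑ f i = 0` it does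
not depend, up to sign, on which `f r` is left out. As `p ^ (k - j)` divides the `j`-th derivative
of `p ^ k`, each `∏_{i ≠ r} p i ^ (k + 2 - m)` divides `W`, hence so does `∏ i, p i ^ (k + 2 - m)`,
the `p i` having no common root. Leaving out a `p r` of maximal degree `d` gives
`deg W ≤ k * (D - d)` with `D = ∑ deg p i ≤ m * d`, and comparing degrees yields `k ≤ m * (m - 2)`.
-/

open Polynomial Matrix

namespace Matrix

variable {R : Type*} [CommRing R]

theorem neg_one_pow_mul_det_submatrix_succAbove_eq {N : ℕ} (V : Matrix (Fin (N + 1)) (Fin N) R)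
    (hV : ∀ j, ∑ s, V s j = 0) (r r' : Fin (N + 1)) :
    (-1) ^ (r : ℕ) * (V.submatrix r.succAbove id).det =
      (-1) ^ (r' : ℕ) * (V.submatrix r'.succAbove id).det := by
  -- Both sides are read off the Laplace expansion along the first column of `[u | V]` for
  -- `u = Pi.single r 1 - Pi.single r' 1`; that matrix is singular because its rows sum to zero.
  let B (u : Fin (N + 1) → R) : Matrix (Fin (N + 1)) (Fin (N + 1)) R :=
    Matrix.of fun s => Fin.cons (u s) (V s)
  have hlaplace (u : Fin (N + 1) → R) :
      (B u).det = ∑ s : Fin (N + 1), (-1) ^ (s : ℕ) * u s * (V.submatrix s.succAbove id).det := by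
    rw [det_succ_column_zero]
    rfl
  have hsingular (u : Fin (N + 1) → R) (hu : ∑ s, u s = 0) : (B u).det = 0 := by
    rw [← det_transpose]
    refine det_eq_zero_of_mulVec_eq_zero_of_mem_nonZeroDivisors (v := 1) (i := 0) ?_ (by simp)
    funext j
    cases j using Fin.cases with
    | zero => simp [mulVec, dotProduct, B, hu]
    | succ j => simp [mulVec, dotProduct, B, hV]
  have := hsingular (Pi.single r 1 - Pi.single r' 1) (by simp [Finset.sum_sub_distrib])
  rw [hlaplace] at this
  simpa [mul_sub, sub_mul, Finset.sum_sub_distrib, sub_eq_zero, Pi.single_apply] using this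

variable {n : Type*} [Fintype n] [DecidableEq n]

theorem prod_dvd_det_of_forall_dvd (M : Matrix n n R) (q : n → R) (h : ∀ i j, q i ∣ M i j) :
    ∏ i, q i ∣ M.det := by
  choose M' hM' using h
  have : M = diagonal q * Matrix.of M' := by
    ext i j
    simp [hM']
  rw [this, det_mul, det_diagonal]
  exact dvd_mul_right _ _

theorem natDegree_det_le_sum (M : Matrix n n R[X]) (D : n → ℕ)
    (h : ∀ i j, (M i j).natDegree ≤ D i) : M.det.natDegree ≤ ∑ i, D i := by
  rw [det_apply']
  refine natDegree_sum_le_of_forall_le _ _ fun σ _ => ?_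
  calc (((Equiv.Perm.sign σ : ℤ) : R[X]) * ∏ i, M (σ i) i).natDegree
      ≤ ∑ i, (M (σ i) i).natDegree := by
        refine (natDegree_mul_le).trans ?_
        rw [natDegree_intCast, zero_add]
        exact natDegree_prod_le _ _
    _ ≤ ∑ i, D (σ i) := Finset.sum_le_sum fun i _ => h _ _
    _ = ∑ i, D i := Equiv.sum_comp σ D

end Matrix

namespace Polynomial

section CommRing

variable {R : Type*} [CommRing R]

noncomputable def wronskianMatrix {ι : Type*} (f : ι → R[X]) (n : ℕ) : Matrix ι (Fin n) R[X] :=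
  Matrix.of fun i j => derivative^[j] (f i)

theorem vecMul_wronskianMatrix {ι : Type*} [Fintype ι] (g f : ι → R[X]) (n : ℕ) (j : Fin n) :
    (g ᵥ* wronskianMatrix f n) j = ∑ i, g i * derivative^[j] (f i) := rfl

theorem wronskian_mul_mul (d a b : R[X]) :
    wronskian (d * a) (d * b) = d ^ 2 * wronskian a b := by
  simp only [wronskian, derivative_mul]
  ring

end CommRing

variable {K : Type*} [Field K]

theorem exists_eq_mul_forall_exists_not_isRoot {ι : Type*} [Fintype ι] (q : ι → K[X]) {i₀ : ι}
    (h : q i₀ ≠ 0) :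
    ∃ g ≠ 0, ∃ q' : ι → K[X], (∀ i, q i = g * q' i) ∧ ∀ α, ∃ i, ¬ (q' i).IsRoot α := by
  classical
  obtain ⟨q', hq', hgcd⟩ := Finset.univ.extract_gcd q ⟨i₀, Finset.mem_univ _⟩
  refine ⟨Finset.univ.gcd q, fun h0 => h (Finset.gcd_eq_zero_iff.mp h0 i₀ (Finset.mem_univ _)),
    q', fun i => hq' i (Finset.mem_univ i), fun α => ?_⟩
  by_contra! hall
  have : X - C α ∣ Finset.univ.gcd q' := Finset.dvd_gcd fun i _ => dvd_iff_isRoot.mpr (hall i)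
  rw [hgcd] at this
  exact not_isUnit_X_sub_C α (isUnit_of_dvd_one this)

theorem exists_natDegree_pos_of_pairwise {ι : Type*} {q : ι → K[X]} (hq : ∀ i, q i ≠ 0)
    (hprop : Pairwise fun i j => ∀ c : K, q i ≠ C c * q j) {i j : ι} (hij : i ≠ j) :
    ∃ r, 0 < (q r).natDegree := by
  by_contra! h
  obtain ⟨a, ha⟩ : ∃ a, q i = C a := ⟨_, eq_C_of_natDegree_eq_zero (Nat.le_zero.mp (h i))⟩
  obtain ⟨b, hb⟩ : ∃ b, q j = C b := ⟨_, eq_C_of_natDegree_eq_zero (Nat.le_zero.mp (h j))⟩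
  have hb0 : b ≠ 0 := fun h0 => hq j (by rw [hb, h0, C_0])
  exact hprop hij (a / b) (by rw [ha, hb, ← C_mul, div_mul_cancel₀ _ hb0])

theorem pairwise_C_mul_comp {ι κ : Type*} {q : ι → K[X]}
    (hprop : Pairwise fun i j => ∀ c : K, q i ≠ C c * q j) {f : κ → ι} (hf : f.Injective)
    {b : κ → K} (hb : ∀ j, b j ≠ 0) :
    Pairwise fun j j' => ∀ c : K, C (b j) * q (f j) ≠ C c * (C (b j') * q (f j')) :=
  fun j j' hjj' c h => hprop (hf.ne hjj') (c * b j' / b j) <|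
    mul_left_cancel₀ (C_ne_zero.mpr (hb j)) <| by
      rw [h, ← mul_assoc, ← mul_assoc, ← C_mul, ← C_mul, mul_div_cancel₀ _ (hb j)]

theorem dvd_of_forall_dvd_mul [IsAlgClosed K] {ι : Type*} {P W : K[X]} (q : ι → K[X])
    (hW : W ≠ 0) (hroot : ∀ α, ∃ r, ¬ (q r).IsRoot α) (h : ∀ r, P ∣ q r * W) : P ∣ W := by
  classical
  have hq (r : ι) (α : K) (hr : ¬ (q r).IsRoot α) : q r * W ≠ 0 :=
    mul_ne_zero (fun h0 => hr (by simp [h0])) hW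
  have hP : P ≠ 0 := by
    obtain ⟨r, hr⟩ := hroot 0
    rintro rfl
    exact hq r 0 hr (zero_dvd_iff.mp (h r))
  refine (IsAlgClosed.splits P).dvd_of_roots_le_roots hP (Multiset.le_iff_count.mpr fun α => ?_)
  obtain ⟨r, hr⟩ := hroot α
  have hcount : (q r).roots.count α = 0 :=
    Multiset.count_eq_zero.mpr fun hα => hr (isRoot_of_mem_roots hα)
  have := Multiset.count_le_of_le α (roots.le_of_dvd (hq r α hr) (h r))
  rwa [roots_mul (hq r α hr), Multiset.count_add, hcount, zero_add] at this

theorem exists_sum_C_mul_pow_eq_zero [IsAlgClosed K] [DecidableEq K] {κ : Type*} [Fintype κ]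
    {k : ℕ} (hk : 0 < k) (q : κ → K[X]) (a : κ → K) (ha : ∑ j, a j • q j ^ k = 0) :
    ∃ b : {j // a j ≠ 0} → K, (∀ j, b j ≠ 0) ∧ ∑ j, (C (b j) * q j) ^ k = 0 := by
  choose b hb using fun j : {j // a j ≠ 0} => IsAlgClosed.exists_pow_nat_eq (a j) hk
  refine ⟨b, fun j h => j.2 (by rw [← hb, h, zero_pow hk.ne']), ?_⟩
  simp_rw [mul_pow, ← C_pow, hb, ← smul_eq_C_mul]
  rw [← ha, ← Finset.sum_subtype (Finset.univ.filter fun j => a j ≠ 0) (by simp)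
    fun j => a j • q j ^ k]
  exact Finset.sum_filter_of_ne fun j _ h => left_ne_zero_of_smul h

section CharZero

variable [CharZero K]

theorem eq_C_mul_of_wronskian_eq_zero {a b : K[X]} (ha : a ≠ 0) (h : wronskian a b = 0) :
    ∃ c : K, b = C c * a := by
  classical
  obtain ⟨a₁, b₁, ha₁, hb₁, hunit⟩ := extract_gcd a b
  have hd : gcd a b ≠ 0 := gcd_ne_zero_of_left ha
  generalize gcd a b = d at ha₁ hb₁ hd
  subst ha₁ hb₁
  rw [wronskian_mul_mul, mul_eq_zero, or_iff_right (pow_ne_zero 2 hd)] at h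
  obtain ⟨ha₁, hb₁⟩ := (gcd_isUnit_iff_isRelPrime.mp hunit).isCoprime.wronskian_eq_zero_iff.mp h
  rw [eq_C_of_derivative_eq_zero ha₁] at ha ⊢
  rw [eq_C_of_derivative_eq_zero hb₁]
  have h0 : a₁.coeff 0 ≠ 0 := fun h0 => ha (by rw [h0, C_0, mul_zero])
  refine ⟨b₁.coeff 0 / a₁.coeff 0, ?_⟩
  rw [← mul_assoc, mul_comm (C _), mul_assoc, ← C_mul, div_mul_cancel₀ _ h0]

theorem det_wronskianMatrix_ne_zero {n : ℕ} {f : Fin n → K[X]} (hf : LinearIndependent K f) :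
    (wronskianMatrix f n).det ≠ 0 := by
  induction n with
  | zero => simp
  | succ n ih =>
    intro hW
    have hker : ∀ h : Fin (n + 1) → K[X], h (Fin.last n) = 0 →
        (∀ j : Fin n, ∑ i, h i * derivative^[j] (f i) = 0) → h = 0 := by
      intro h hlast hj
      have : h ∘ Fin.castSucc = 0 := by
        refine eq_zero_of_vecMul_eq_zero (ih (hf.comp _ (Fin.castSucc_injective n))) ?_
        funext j
        simpa [vecMul_wronskianMatrix, Fin.sum_univ_castSucc, hlast] using hj j
      funext i
      cases i using Fin.lastCases with
      | last => exact hlast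
      | cast i => exact congrFun this i
    -- For a kernel vector `g`, `g'` is a kernel vector of the first `n` columns, whose only kernel
    -- vectors with last entry `0` are trivial; hence every `g i / g (last n)` is constant.
    obtain ⟨g, hg0, hg⟩ := exists_vecMul_eq_zero_iff.mpr hW
    have hg (j : Fin (n + 1)) : ∑ i, g i * derivative^[j] (f i) = 0 := congrFun hg j
    have hg_last : g (Fin.last n) ≠ 0 := fun h0 => hg0 (hker g h0 fun j => hg j.castSucc)
    have hg' (j : Fin n) : ∑ i, derivative (g i) * derivative^[j] (f i) = 0 := by
      have h1 := congrArg derivative (hg j.castSucc)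
      simp only [derivative_sum, derivative_mul, Finset.sum_add_distrib, derivative_zero,
        Fin.val_castSucc, ← Function.iterate_succ_apply' derivative] at h1
      have h2 : ∑ i, g i * derivative^[(j : ℕ).succ] (f i) = 0 := hg j.succ
      rwa [h2, add_zero] at h1
    have hwr (i : Fin (n + 1)) : wronskian (g (Fin.last n)) (g i) = 0 := by
      refine congrFun (hker (fun i => wronskian (g (Fin.last n)) (g i)) ?_ fun j => ?_) i
      · simp [wronskian, mul_comm]
      · simp only [wronskian, sub_mul, Finset.sum_sub_distrib, mul_assoc, ← Finset.mul_sum, hg' j]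
        rw [← Fin.val_castSucc, hg j.castSucc, mul_zero, mul_zero, sub_zero]
    choose c hc using fun i => eq_C_mul_of_wronskian_eq_zero hg_last (hwr i)
    have hrel : ∑ i, c i • f i = 0 := by
      have h0 := hg 0
      simp only [Fin.val_zero, Function.iterate_zero_apply] at h0
      rw [Finset.sum_congr rfl fun i _ => by rw [hc i, mul_comm (C _), mul_assoc, ← smul_eq_C_mul],
        ← Finset.mul_sum, mul_eq_zero] at h0
      exact h0.resolve_left hg_last
    have := Fintype.linearIndependent_iff.mp hf c hrel (Fin.last n)
    apply hg_last
    rw [hc, this, C_0, zero_mul]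

variable [IsAlgClosed K]

theorem prod_pow_dvd_det_wronskianMatrix {N k : ℕ} (q : Fin (N + 1) → K[X])
    (hroot : ∀ α, ∃ i, ¬ (q i).IsRoot α) (hsum : ∑ i, q i ^ k = 0)
    (hli : ∀ r : Fin (N + 1), LinearIndependent K fun t => q (r.succAbove t) ^ k)
    (r : Fin (N + 1)) :
    ∏ s, q s ^ (k + 1 - N) ∣ (wronskianMatrix (fun t => q (r.succAbove t) ^ k) N).det := by
  set W := fun r : Fin (N + 1) => (wronskianMatrix (fun t => q (r.succAbove t) ^ k) N).det
  have hWdvd (r r' : Fin (N + 1)) : W r ∣ W r' := by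
    have := neg_one_pow_mul_det_submatrix_succAbove_eq (wronskianMatrix (fun i => q i ^ k) N)
      (fun j => by simp [wronskianMatrix, ← iterate_derivative_sum, hsum]) r r'
    exact ((isUnit_neg_one.pow _).dvd_mul_left).mp (this ▸ dvd_mul_left _ _)
  have hPdvd (r : Fin (N + 1)) : ∏ s, q s ^ (k + 1 - N) ∣ q r ^ (k + 1 - N) * W r := by
    rw [Fin.prod_univ_succAbove _ r]
    refine mul_dvd_mul_left _ (prod_dvd_det_of_forall_dvd _ _ fun t j => ?_)
    exact (pow_dvd_pow _ (by omega)).trans (pow_sub_dvd_iterate_derivative_pow _ _ _)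
  refine dvd_of_forall_dvd_mul (fun r => q r ^ (k + 1 - N)) (det_wronskianMatrix_ne_zero (hli r))
    (fun α => ?_) fun r' => (hPdvd r').trans (mul_dvd_mul_left _ (hWdvd r' r))
  obtain ⟨i, hi⟩ := hroot α
  exact ⟨i, by simpa [IsRoot, eval_pow] using pow_ne_zero _ hi⟩

theorem lt_sq_of_sum_pow_eq_zero_of_linearIndependent {N k : ℕ} (q : Fin (N + 1) → K[X])
    (hq : ∀ i, q i ≠ 0) (hroot : ∀ α, ∃ i, ¬ (q i).IsRoot α) (hdeg : ∃ i, 0 < (q i).natDegree)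
    (hsum : ∑ i, q i ^ k = 0)
    (hli : ∀ r : Fin (N + 1), LinearIndependent K fun t => q (r.succAbove t) ^ k) :
    k < N ^ 2 := by
  obtain ⟨imax, himax⟩ := Finite.exists_max fun i => (q i).natDegree
  set W := (wronskianMatrix (fun t => q (imax.succAbove t) ^ k) N).det
  set c := k + 1 - N
  have hlow : c * ∑ s, (q s).natDegree ≤ W.natDegree := by
    rw [Finset.mul_sum]
    simp_rw [← natDegree_pow]
    rw [← natDegree_prod _ _ fun s _ => pow_ne_zero _ (hq s)]
    exact natDegree_le_of_dvd (prod_pow_dvd_det_wronskianMatrix q hroot hsum hli imax)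
      (det_wronskianMatrix_ne_zero (hli imax))
  have hup : W.natDegree ≤ k * ∑ t, (q (imax.succAbove t)).natDegree := by
    rw [Finset.mul_sum]
    refine natDegree_det_le_sum _ _ fun t j => ?_
    exact ((natDegree_iterate_derivative _ _).trans (Nat.sub_le _ _)).trans natDegree_pow_le
  have hrest : ∑ t, (q (imax.succAbove t)).natDegree ≤ N * (q imax).natDegree := by
    simpa using Finset.sum_le_card_nsmul Finset.univ _ _ fun t _ => himax (imax.succAbove t)
  have hpos : 0 < (q imax).natDegree := hdeg.elim fun i hi => hi.trans_le (himax i)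
  rw [Fin.sum_univ_succAbove _ imax] at hlow
  by_contra! hk
  have hc : c + N = k + 1 := by have := Nat.le_self_pow two_ne_zero N; omega
  have key := hlow.trans hup
  generalize (q imax).natDegree = M at key hrest hpos
  generalize ∑ t, (q (imax.succAbove t)).natDegree = R at key hrest
  clear_value c
  rcases N.eq_zero_or_pos with hN | hN
  · rw [hN, zero_mul] at hrest
    nlinarith
  · nlinarith [Nat.mul_le_mul_left (N - 1) hrest, Nat.sub_add_cancel hN]

theorem add_two_mul_card_le_card_sq_of_linearIndependent {ι : Type*} [Fintype ι] [Nontrivial ι]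
    {k : ℕ} (q : ι → K[X]) (hq : ∀ i, q i ≠ 0)
    (hprop : Pairwise fun i j => ∀ c : K, q i ≠ C c * q j) (hroot : ∀ α, ∃ i, ¬ (q i).IsRoot α)
    (hsum : ∑ i, q i ^ k = 0)
    (hli : ∀ i₁, LinearIndependent K fun i : {i : ι // i ≠ i₁} => q i ^ k) :
    k + 2 * Fintype.card ι ≤ Fintype.card ι ^ 2 := by
  obtain ⟨i, j, hij⟩ := exists_pair_ne ι
  obtain ⟨N, hN⟩ : ∃ N, Fintype.card ι = N + 1 := Nat.exists_eq_succ_of_ne_zero Fintype.card_ne_zero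
  let e := (Fintype.equivFinOfCardEq hN).symm
  have := lt_sq_of_sum_pow_eq_zero_of_linearIndependent (fun s => q (e s)) (fun s => hq _)
    (fun α => (hroot α).elim fun i hi => ⟨e.symm i, by simpa using hi⟩)
    ((exists_natDegree_pos_of_pairwise hq hprop hij).elim fun i hi => ⟨e.symm i, by simpa using hi⟩)
    (by rw [← hsum]; exact e.sum_comp fun i => q i ^ k)
    (fun r => (hli (e r)).comp (fun t => ⟨e (r.succAbove t), e.injective.ne (r.succAbove_ne t)⟩)
      fun t t' h => r.succAbove_right_injective (e.injective (congrArg Subtype.val h)))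
  rw [hN]
  nlinarith

theorem add_two_mul_card_le_card_sq_of_sum_pow_eq_zero {ι : Type*} [Fintype ι] [Nonempty ι]
    {k : ℕ} (hk : 0 < k) (q : ι → K[X]) (hq : ∀ i, q i ≠ 0)
    (hprop : Pairwise fun i j => ∀ c : K, q i ≠ C c * q j) (hsum : ∑ i, q i ^ k = 0) :
    k + 2 * Fintype.card ι ≤ Fintype.card ι ^ 2 := by
  induction hn : Fintype.card ι using Nat.strong_induction_on generalizing ι with
  | _ n ih =>
  classical
  obtain ⟨i₀⟩ := ‹Nonempty ι›
  have : Nontrivial ι := by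
    by_contra h
    have : Subsingleton ι := not_nontrivial_iff_subsingleton.mp h
    rw [Fintype.sum_subsingleton _ i₀] at hsum
    exact hq i₀ ((pow_eq_zero_iff hk.ne').mp hsum)
  obtain ⟨g, hg, q', hqg, hroot⟩ := exists_eq_mul_forall_exists_not_isRoot q (hq i₀)
  have hq' (i : ι) : q' i ≠ 0 := fun h => hq i (by rw [hqg, h, mul_zero])
  have hprop' : Pairwise fun i j => ∀ c : K, q' i ≠ C c * q' j := fun i j hij c h =>
    hprop hij c (by rw [hqg, hqg, h, mul_left_comm])
  have hsum' : ∑ i, q' i ^ k = 0 := by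
    simp_rw [hqg, mul_pow, ← Finset.mul_sum] at hsum
    exact (mul_eq_zero.mp hsum).resolve_left (pow_ne_zero _ hg)
  by_cases hli : ∀ i₁, LinearIndependent K fun i : {i : ι // i ≠ i₁} => q' i ^ k
  · exact hn ▸ add_two_mul_card_le_card_sq_of_linearIndependent q' hq' hprop' hroot hsum' hli
  obtain ⟨i₁, hdep⟩ := not_forall.mp hli
  obtain ⟨a, ha, j₀, hj₀⟩ := Fintype.not_linearIndependent_iff.mp hdep
  have : Nonempty {j // a j ≠ 0} := ⟨⟨j₀, hj₀⟩⟩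
  have hcard : Fintype.card {j // a j ≠ 0} < n :=
    (Fintype.card_subtype_le _).trans_lt (hn ▸ Fintype.card_subtype_lt (x := i₁) (by simp))
  obtain ⟨b, hb0, hsumS⟩ :=
    exists_sum_C_mul_pow_eq_zero hk (fun j : {i : ι // i ≠ i₁} => q' j) a ha
  have := ih _ hcard (fun j => C (b j) * q' j)
    (fun j => mul_ne_zero (C_ne_zero.mpr (hb0 j)) (hq' j))
    (pairwise_C_mul_comp hprop' (Subtype.val_injective.comp Subtype.val_injective) hb0) hsumS rfl
  have : 0 < Fintype.card {j // a j ≠ 0} := Fintype.card_pos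
  nlinarith

end CharZero

end Polynomial

theorem exponent_bound_no_proportional (m : ℕ) (hm : 3 ≤ m) (p : Fin m → ℂ[X])
    (k : ℕ) (hk : 0 < k) (hp : ∀ i, p i ≠ 0)
    (hsum : ∑ i, p i ^ k = 0)
    (hprop : ∀ i j : Fin m, i ≠ j → ∀ c : ℂ, p i ≠ C c * p j) :
    3 * (k : ℤ) < (m : ℤ) ^ 3 + 7 * (m : ℤ) ^ 2 - 49 * (m : ℤ) + 68 := by
  have : Nonempty (Fin m) := ⟨⟨0, by omega⟩⟩
  have h := add_two_mul_card_le_card_sq_of_sum_pow_eq_zero hk p hp hprop hsum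
  rw [Fintype.card_fin] at h
  have hm' : (3 : ℤ) ≤ m := by exact_mod_cast hm
  have h' : (k : ℤ) + 2 * m ≤ m ^ 2 := by exact_mod_cast h
  nlinarith [mul_nonneg (sq_nonneg ((m : ℤ) - 3)) (by linarith : (0 : ℤ) ≤ m + 10)]
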